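/- Assume in addition that P has finite second moment, i.e. Σ_{k≥1} k² P(k) < ∞. There exist a constant c₁ > 0 and λ₀ ∈ (λ₁, 1) such that for every λ with λ₁ < λ < λ₀ and every CE fixed point x, one has x'(0) ≤ −c₁ · ω³ · e^{−π(1−λ)/(2ω)}, where ω = (1/2)√(−λ² + 2(2d−1)λ − 1). -/

import Mathlib

/-!
Write `u = 1 - x`. Differentiating the fixed-point equation turns it into the planar system
`u' = λ (v - u)`, `v' = v - (1 - ψ (1 - u))` with `x'(0) = -λ v(0)`; its linear part has the
eigenvalues `α ± i ω`, `α = (1 - λ)/2`, and by the second-moment assumption the nonlinearity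
`d u - (1 - ψ (1 - u))` lies between `0` and `K u²`. In the complex eigencoordinate `z`, whose
imaginary part is `ω u ≥ 0`, the orbit starts at the real point `λ v(0)` and never leaves the closed
upper half-plane. As long as `u ≤ ω²`, Grönwall's inequality bounds `‖z t‖` by
`λ v(0) e^{(α + λ K ω) t}`, so up to time `π/ω + 1`, when the linear solution
`λ v(0) e^{(α + i ω) t}` lies in the lower half-plane, the nonlinear term moves `z` only by
`O((λ v(0))² e^{α π / ω} / (α ω²))`. Hence either `u` reaches `ω²` before that time, or this
correction is at least `λ v(0) sin ω`; both force `λ v(0) ≳ ω³ e^{-α π / ω}`.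
-/

open MeasureTheory

/-- Generating function ψ(x) = Σ_{k≥0} P(k) x^k. -/
noncomputable def genFun (P : ℕ → ℝ) (x : ℝ) : ℝ := ∑' k : ℕ, P k * x ^ k

/-- Context: P is a probability distribution on ℕ with mean d ∈ (1,∞), and ρ ∈ [0,1)
is the smallest fixed point of its generating function on [0,1]. -/
structure CEContext (P : ℕ → ℝ) (d ρ : ℝ) : Prop where
  P_nonneg : ∀ k, 0 ≤ P k
  P_sum_one : ∑' k : ℕ, P k = 1
  mean_summable : Summable (fun k : ℕ => (k : ℝ) * P k)
  mean_eq : ∑' k : ℕ, (k : ℝ) * P k = d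
  d_gt_one : 1 < d
  rho_nonneg : 0 ≤ ρ
  rho_lt_one : ρ < 1
  rho_fixed : genFun P ρ = ρ
  rho_least : ∀ y : ℝ, 0 ≤ y → y ≤ 1 → genFun P y = y → ρ ≤ y

/-- A CE fixed point for infection rate λ ∈ (0,1): x : [0,∞) → [0,1] non-increasing,
x(0) = 1, x(t) → ρ, and
x(t) = e^{−λt} + λ e^{−λt} ∫₀ᵗ e^{(λ+1)u} (∫_u^∞ ψ(x(s)) e^{−s} ds) du. -/
def IsCEFixedPoint (P : ℕ → ℝ) (ρ lam : ℝ) (x : ℝ → ℝ) : Prop :=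
  (∀ t, 0 ≤ t → x t ∈ Set.Icc (0 : ℝ) 1) ∧
  AntitoneOn x (Set.Ici 0) ∧
  x 0 = 1 ∧
  Filter.Tendsto x Filter.atTop (nhds ρ) ∧
  (∀ t, 0 ≤ t →
    x t = Real.exp (-(lam * t)) + lam * Real.exp (-(lam * t)) *
      ∫ u in (0:ℝ)..t, Real.exp ((lam + 1) * u) *
        ∫ s in Set.Ioi u, genFun P (x s) * Real.exp (-s))

open Real Set Filter
open Complex (I)
open scoped Complex

section LinearODE

variable {μ : ℂ} {z F : ℝ → ℂ}

lemma hasDerivAt_cexp_neg_mul_mul (hz : ∀ t, HasDerivAt z (μ * z t + F t) t) (t : ℝ) :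
    HasDerivAt (fun t : ℝ => cexp (-μ * t) * z t) (cexp (-μ * t) * F t) t := by
  have hexp : HasDerivAt (fun t : ℝ => cexp (-μ * t)) (cexp (-μ * t) * -μ) t := by
    simpa using (((hasDerivAt_id t).ofReal_comp).const_mul (-μ)).cexp
  exact (hexp.mul (hz t)).congr_deriv (by ring)

lemma norm_cexp_neg_mul (μ : ℂ) (t : ℝ) : ‖cexp (-μ * t)‖ = exp (-(μ.re * t)) := by
  simp [Complex.norm_exp]

lemma norm_le_of_hasDerivAt_mul_add (hz : ∀ t, HasDerivAt z (μ * z t + F t) t) {L b : ℝ}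
    (hF : ∀ t ∈ Ico 0 b, ‖F t‖ ≤ L * ‖z t‖) :
    ∀ t ∈ Icc 0 b, ‖z t‖ ≤ ‖z 0‖ * exp ((μ.re + L) * t) := by
  have hf := hasDerivAt_cexp_neg_mul_mul hz
  have hnorm : ∀ t : ℝ, ‖cexp (-μ * t) * z t‖ = exp (-(μ.re * t)) * ‖z t‖ := fun t => by
    rw [norm_mul, norm_cexp_neg_mul]
  intro t ht
  have key := norm_le_gronwallBound_of_norm_deriv_right_le (δ := ‖z 0‖) (K := L) (ε := 0)
    (fun t _ => (hf t).continuousAt.continuousWithinAt) (fun t _ => (hf t).hasDerivWithinAt)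
    (by simp) (fun s hs => ?_) t ht
  · rw [gronwallBound_ε0, sub_zero, hnorm] at key
    calc ‖z t‖ = exp (μ.re * t) * (exp (-(μ.re * t)) * ‖z t‖) := by
          rw [← mul_assoc, ← exp_add, add_neg_cancel, exp_zero, one_mul]
      _ ≤ exp (μ.re * t) * (‖z 0‖ * exp (L * t)) := by gcongr
      _ = ‖z 0‖ * exp ((μ.re + L) * t) := by rw [add_mul, exp_add]; ring
  · rw [norm_mul, norm_cexp_neg_mul, hnorm, add_zero, mul_left_comm]
    exact mul_le_mul_of_nonneg_left (hF s hs) (exp_pos _).le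

lemma norm_cexp_neg_mul_mul_sub_le (hz : ∀ t, HasDerivAt z (μ * z t + F t) t) {C β b : ℝ}
    (hβ : 0 < β) (hF : ∀ t ∈ Ico 0 b, ‖F t‖ ≤ C * exp ((μ.re + β) * t)) :
    ∀ t ∈ Icc 0 b, ‖cexp (-μ * t) * z t - z 0‖ ≤ C / β * (exp (β * t) - 1) := by
  have hf := hasDerivAt_cexp_neg_mul_mul hz
  have hB : ∀ t, HasDerivAt (fun t => C / β * (exp (β * t) - 1)) (C * exp (β * t)) t := fun t => by
    have := (((hasDerivAt_id t).const_mul β).exp.sub_const 1).const_mul (C / β)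
    simp only [id, mul_one] at this
    exact this.congr_deriv (by field_simp)
  refine image_norm_le_of_norm_deriv_right_le_deriv_boundary
    (fun t _ => ((hf t).sub_const (z 0)).continuousAt.continuousWithinAt)
    (fun t _ => ((hf t).sub_const (z 0)).hasDerivWithinAt) (by simp) hB (fun s hs => ?_)
  rw [norm_mul, norm_cexp_neg_mul]
  calc exp (-(μ.re * s)) * ‖F s‖ ≤ exp (-(μ.re * s)) * (C * exp ((μ.re + β) * s)) := by
        gcongr; exact hF s hs
    _ = C * exp (β * s) := by
        rw [mul_left_comm, ← exp_add]; congr 2; ring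

end LinearODE

lemma mul_sin_le_norm_sub_of_im_nonneg {α ω Q T : ℝ} {w : ℂ} (hT : ω * T = ω + π)
    (h : 0 ≤ (cexp ((α + ω * I) * T) * w).im) : Q * sin ω ≤ ‖w - Q‖ := by
  have hrot : cexp ((α + ω * I) * T) = -(exp (α * T) : ℂ) * cexp (ω * I) := by
    have hT' : (ω : ℂ) * T = ω + π := by exact_mod_cast hT
    have : (α + ω * I) * T = ((α * T : ℝ) : ℂ) + (ω * I + π * I) := by
      push_cast
      linear_combination I * hT'
    rw [this, Complex.exp_add, Complex.exp_add, Complex.exp_pi_mul_I, Complex.ofReal_exp]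
    ring
  have him : (cexp (ω * I) * w).im ≤ 0 := by
    rw [hrot, mul_assoc, neg_mul, Complex.neg_im, Complex.im_ofReal_mul] at h
    nlinarith [exp_pos (α * T)]
  have hsplit : (cexp (ω * I) * w).im = Q * sin ω + (cexp (ω * I) * (w - Q)).im := by
    rw [mul_sub, Complex.sub_im, Complex.im_mul_ofReal, Complex.exp_ofReal_mul_I_im]
    ring
  have hle : -(cexp (ω * I) * (w - Q)).im ≤ ‖w - Q‖ := by
    have := (abs_le.1 (Complex.abs_im_le_norm (cexp (ω * I) * (w - Q)))).1
    rw [norm_mul, Complex.norm_exp_ofReal_mul_I, one_mul] at this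
    linarith
  linarith

lemma exists_first_le {g : ℝ → ℝ} (hg : Continuous g) {r t₀ : ℝ} (ht₀ : 0 ≤ t₀)
    (h : r ≤ g t₀) : ∃ T ∈ Icc 0 t₀, r ≤ g T ∧ ∀ t ∈ Ico 0 T, g t < r := by
  obtain ⟨T, ⟨hT, hrT⟩, hleast⟩ :=
    (isCompact_Icc.inter_right (isClosed_Ici.preimage hg)).exists_isLeast
      ⟨t₀, ⟨ht₀, le_rfl⟩, h⟩
  refine ⟨T, hT, hrT, fun t ht => lt_of_not_ge fun hrt => ?_⟩
  exact (hleast ⟨⟨ht.1, ht.2.le.trans hT.2⟩, hrt⟩).not_gt ht.2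

section Rotation

variable {α ω κ R Q : ℝ} {z F : ℝ → ℂ}

lemma norm_le_of_forall_im_lt (hκ : 0 ≤ κ)
    (hz : ∀ t, HasDerivAt z ((α + ω * I) * z t + F t) t)
    (him : ∀ t, 0 ≤ t → 0 ≤ (z t).im) (hF : ∀ t, 0 ≤ t → ‖F t‖ ≤ κ * (z t).im ^ 2)
    {b : ℝ} (hb : ∀ t ∈ Ico 0 b, (z t).im < R) :
    ∀ t ∈ Icc 0 b, ‖z t‖ ≤ ‖z 0‖ * exp ((α + κ * R) * t) := by
  have key := norm_le_of_hasDerivAt_mul_add hz (L := κ * R) (b := b) fun t ht => by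
    have h0 := him t ht.1
    have hR := hb t ht
    have hnorm := Complex.im_le_norm (z t)
    have hsq : (z t).im ^ 2 ≤ R * ‖z t‖ := by nlinarith
    calc ‖F t‖ ≤ κ * (z t).im ^ 2 := hF t ht.1
      _ ≤ κ * (R * ‖z t‖) := by gcongr
      _ = κ * R * ‖z t‖ := by ring
  simpa using key

lemma le_norm_mul_exp_of_le_im (hκ : 0 ≤ κ) (hακ : 0 ≤ α + κ * R)
    (hz : ∀ t, HasDerivAt z ((α + ω * I) * z t + F t) t)
    (him : ∀ t, 0 ≤ t → 0 ≤ (z t).im) (hF : ∀ t, 0 ≤ t → ‖F t‖ ≤ κ * (z t).im ^ 2)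
    {t : ℝ} (ht : 0 ≤ t) (hRt : R ≤ (z t).im) : R ≤ ‖z 0‖ * exp ((α + κ * R) * t) := by
  have hcont : Continuous fun t => (z t).im :=
    Complex.continuous_im.comp (continuous_iff_continuousAt.2 fun t => (hz t).continuousAt)
  obtain ⟨T, hT, hRT, hbelow⟩ := exists_first_le hcont ht hRt
  calc R ≤ (z T).im := hRT
    _ ≤ ‖z T‖ := Complex.im_le_norm _
    _ ≤ ‖z 0‖ * exp ((α + κ * R) * T) :=
        norm_le_of_forall_im_lt hκ hz him hF hbelow T ⟨hT.1, le_rfl⟩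
    _ ≤ ‖z 0‖ * exp ((α + κ * R) * t) := by gcongr; exact hT.2

lemma eq_zero_of_forall_im_nonneg (hκ : 0 ≤ κ) (hακ : 0 ≤ α + κ * R) (hR : 0 < R)
    (hz : ∀ t, HasDerivAt z ((α + ω * I) * z t + F t) t)
    (him : ∀ t, 0 ≤ t → 0 ≤ (z t).im) (hF : ∀ t, 0 ≤ t → ‖F t‖ ≤ κ * (z t).im ^ 2)
    (hz0 : z 0 = 0) {t : ℝ} (ht : 0 ≤ t) : z t = 0 := by
  have hbelow : ∀ s ∈ Ico 0 t, (z s).im < R := fun s hs => lt_of_not_ge fun hRs => by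
    have := le_norm_mul_exp_of_le_im hκ hακ hz him hF hs.1 hRs
    rw [hz0, norm_zero, zero_mul] at this
    linarith
  have := norm_le_of_forall_im_lt hκ hz him hF hbelow t ⟨ht, le_rfl⟩
  rw [hz0, norm_zero, zero_mul] at this
  exact norm_le_zero_iff.1 this

lemma mul_sin_le_of_forall_im_lt (hω : 0 < ω) (hκ : 0 ≤ κ) (hβ : 0 < α + 2 * κ * R)
    (hz : ∀ t, HasDerivAt z ((α + ω * I) * z t + F t) t)
    (him : ∀ t, 0 ≤ t → 0 ≤ (z t).im) (hF : ∀ t, 0 ≤ t → ‖F t‖ ≤ κ * (z t).im ^ 2)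
    (hz0 : z 0 = Q) (hb : ∀ t ∈ Ico 0 (π / ω + 1), (z t).im < R) :
    Q * sin ω ≤ κ * Q ^ 2 / (α + 2 * κ * R) * exp ((α + 2 * κ * R) * (π / ω + 1)) := by
  set T := π / ω + 1
  set β := α + 2 * κ * R
  have hT : 0 ≤ T := by positivity
  have hgrowth := norm_le_of_forall_im_lt hκ hz him hF hb
  rw [hz0, Complex.norm_real, Real.norm_eq_abs] at hgrowth
  have hduhamel := norm_cexp_neg_mul_mul_sub_le hz (C := κ * Q ^ 2) hβ (fun s hs => ?_) T
    ⟨hT, le_rfl⟩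
  · have hangle := mul_sin_le_norm_sub_of_im_nonneg (α := α) (ω := ω) (Q := Q) (T := T)
      (w := cexp (-(α + ω * I) * T) * z T) (by rw [mul_add, mul_div_cancel₀ _ hω.ne']; ring) (by
        rw [← mul_assoc, ← Complex.exp_add, neg_mul, add_neg_cancel, Complex.exp_zero, one_mul]
        exact him T hT)
    rw [hz0] at hduhamel
    calc Q * sin ω ≤ κ * Q ^ 2 / β * (exp (β * T) - 1) := hangle.trans hduhamel
      _ ≤ κ * Q ^ 2 / β * exp (β * T) := by gcongr; linarith
  · have hs' : s ∈ Icc 0 T := ⟨hs.1, hs.2.le⟩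
    calc ‖F s‖ ≤ κ * ‖z s‖ ^ 2 := by
          refine (hF s hs.1).trans ?_
          gcongr
          · exact him s hs.1
          · exact Complex.im_le_norm _
      _ ≤ κ * (|Q| * exp ((α + κ * R) * s)) ^ 2 := by gcongr; exact hgrowth s hs'
      _ = κ * Q ^ 2 * exp ((((α : ℂ) + ω * I).re + β) * s) := by
          rw [mul_pow, sq_abs, ← exp_nat_mul]
          simp only [Complex.add_re, Complex.ofReal_re, Complex.mul_re, Complex.I_re,
            Complex.I_im, Complex.ofReal_im, β]
          ring_nf

theorem le_of_forall_im_nonneg (hω : 0 < ω) (hα : 0 < α) (hκ : 0 < κ) (hR : 0 < R)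
    (hz : ∀ t, HasDerivAt z ((α + ω * I) * z t + F t) t)
    (him : ∀ t, 0 ≤ t → 0 ≤ (z t).im) (hF : ∀ t, 0 ≤ t → ‖F t‖ ≤ κ * (z t).im ^ 2)
    (hz0 : z 0 = Q) (hQ : 0 ≤ Q) (hne : ∃ t, 0 ≤ t ∧ z t ≠ 0) :
    min R (α * sin ω / κ) * exp (-((α + 2 * κ * R) * (π / ω + 1))) ≤ Q := by
  set T := π / ω + 1
  set β := α + 2 * κ * R
  have hκR : 0 < κ * R := mul_pos hκ hR
  have hQ0 : 0 < Q := by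
    refine hQ.lt_of_ne fun hQ0 => ?_
    obtain ⟨t, ht, hzt⟩ := hne
    exact hzt (eq_zero_of_forall_im_nonneg hκ.le (by positivity) hR hz him hF
      (by rw [hz0, ← hQ0, Complex.ofReal_zero]) ht)
  rw [exp_neg, ← div_eq_mul_inv, div_le_iff₀ (exp_pos _)]
  by_cases hexit : ∃ t ∈ Ico 0 T, R ≤ (z t).im
  · obtain ⟨t, ht, hRt⟩ := hexit
    have hbound := le_norm_mul_exp_of_le_im hκ.le (by positivity) hz him hF ht.1 hRt
    rw [hz0, Complex.norm_real, Real.norm_of_nonneg hQ] at hbound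
    refine (min_le_left _ _).trans (hbound.trans ?_)
    exact mul_le_mul_of_nonneg_left
      (exp_le_exp.2 (mul_le_mul (by linarith) ht.2.le ht.1 (by positivity))) hQ
  · push Not at hexit
    have hturn := mul_sin_le_of_forall_im_lt hω hκ.le (by positivity) hz him hF hz0 hexit
    refine (min_le_right _ _).trans ?_
    rw [div_le_iff₀ hκ]
    have hβ : 0 < β := by positivity
    have hsin : β * sin ω ≤ κ * Q * exp (β * T) := by
      refine le_of_mul_le_mul_left ?_ hQ0
      calc Q * (β * sin ω) = β * (Q * sin ω) := by ring
        _ ≤ β * (κ * Q ^ 2 / β * exp (β * T)) := by gcongr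
        _ = Q * (κ * Q * exp (β * T)) := by field_simp
    have hαβ : α ≤ β := by linarith
    rcases le_or_gt 0 (sin ω) with hs | hs
    · nlinarith [mul_le_mul_of_nonneg_right hαβ hs]
    · nlinarith [mul_neg_of_pos_of_neg hα hs, mul_pos (mul_pos hQ0 (exp_pos (β * T))) hκ]

end Rotation

lemma one_sub_pow_le {w : ℝ} (h0 : 0 ≤ w) (h1 : w ≤ 1) (k : ℕ) :
    (1 - w) ^ k ≤ 1 - k * w + k ^ 2 / 2 * w ^ 2 := by
  induction k with
  | zero => simp
  | succ n ih =>
    have hn : (0 : ℝ) ≤ n := n.cast_nonneg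
    calc (1 - w) ^ (n + 1) = (1 - w) ^ n * (1 - w) := pow_succ _ _
      _ ≤ (1 - n * w + n ^ 2 / 2 * w ^ 2) * (1 - w) := by gcongr
      _ ≤ 1 - ((n + 1 : ℕ) : ℝ) * w + ((n + 1 : ℕ) : ℝ) ^ 2 / 2 * w ^ 2 := by
        push_cast
        nlinarith [mul_nonneg (mul_nonneg hn h0) h0,
          mul_nonneg (mul_nonneg (mul_nonneg hn hn) h0) (mul_nonneg h0 h0)]

namespace CEContext

variable {P : ℕ → ℝ} {d ρ : ℝ}

lemma summable (h : CEContext P d ρ) : Summable P := by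
  by_contra hs
  have := h.P_sum_one
  rw [tsum_eq_zero_of_not_summable hs] at this
  norm_num at this

lemma mul_pow_le (h : CEContext P d ρ) {y : ℝ} (h0 : 0 ≤ y) (h1 : y ≤ 1) (k : ℕ) :
    P k * y ^ k ≤ P k :=
  mul_le_of_le_one_right (h.P_nonneg k) (pow_le_one₀ h0 h1)

lemma summable_mul_pow (h : CEContext P d ρ) {y : ℝ} (h0 : 0 ≤ y) (h1 : y ≤ 1) :
    Summable fun k => P k * y ^ k :=
  h.summable.of_nonneg_of_le (fun k => mul_nonneg (h.P_nonneg k) (pow_nonneg h0 k))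
    (h.mul_pow_le h0 h1)

lemma genFun_nonneg (h : CEContext P d ρ) {y : ℝ} (h0 : 0 ≤ y) : 0 ≤ genFun P y :=
  tsum_nonneg fun k => mul_nonneg (h.P_nonneg k) (pow_nonneg h0 k)

lemma genFun_le_one (h : CEContext P d ρ) {y : ℝ} (h0 : 0 ≤ y) (h1 : y ≤ 1) :
    genFun P y ≤ 1 :=
  h.P_sum_one ▸ (h.summable_mul_pow h0 h1).tsum_le_tsum (h.mul_pow_le h0 h1) h.summable

lemma genFun_mono (h : CEContext P d ρ) {a b : ℝ} (h0 : 0 ≤ a) (hab : a ≤ b) (h1 : b ≤ 1) :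
    genFun P a ≤ genFun P b :=
  (h.summable_mul_pow h0 (hab.trans h1)).tsum_le_tsum
    (fun k => mul_le_mul_of_nonneg_left (pow_le_pow_left₀ h0 hab k) (h.P_nonneg k))
    (h.summable_mul_pow (h0.trans hab) h1)

lemma continuousOn_genFun (h : CEContext P d ρ) : ContinuousOn (genFun P) (Icc 0 1) :=
  continuousOn_tsum (fun k => (continuous_const.mul (continuous_pow k)).continuousOn)
    h.summable fun k y hy => by
      rw [Real.norm_of_nonneg (mul_nonneg (h.P_nonneg k) (pow_nonneg hy.1 k))]
      exact h.mul_pow_le hy.1 hy.2 k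

lemma one_sub_mul_le_genFun_one_sub (h : CEContext P d ρ) {w : ℝ} (h0 : 0 ≤ w) (h1 : w ≤ 1) :
    1 - d * w ≤ genFun P (1 - w) := by
  have hmean := h.mean_summable.mul_right w
  calc 1 - d * w = ∑' k, (P k - k * P k * w) := by
        rw [h.summable.tsum_sub hmean, h.P_sum_one, tsum_mul_right, h.mean_eq]
    _ ≤ genFun P (1 - w) := by
        refine (h.summable.sub hmean).tsum_le_tsum (fun k => ?_)
          (h.summable_mul_pow (by linarith) (by linarith))
        have := one_add_mul_le_pow (a := -w) (by linarith) k
        rw [← sub_eq_add_neg] at this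
        nlinarith [h.P_nonneg k]

lemma genFun_one_sub_le (h : CEContext P d ρ) (hsecond : Summable fun k : ℕ => (k : ℝ) ^ 2 * P k)
    {w : ℝ} (h0 : 0 ≤ w) (h1 : w ≤ 1) :
    genFun P (1 - w) ≤ 1 - d * w + (∑' k : ℕ, (k : ℝ) ^ 2 * P k) / 2 * w ^ 2 := by
  have hmean := h.mean_summable.mul_right w
  have hvar := hsecond.mul_right (w ^ 2 / 2)
  calc genFun P (1 - w) ≤ ∑' k, (P k - k * P k * w + k ^ 2 * P k * (w ^ 2 / 2)) := by
        refine (h.summable_mul_pow (by linarith) (by linarith)).tsum_le_tsum (fun k => ?_)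
          ((h.summable.sub hmean).add hvar)
        have := mul_le_mul_of_nonneg_left (one_sub_pow_le h0 h1 k) (h.P_nonneg k)
        linarith
    _ = 1 - d * w + (∑' k : ℕ, (k : ℝ) ^ 2 * P k) / 2 * w ^ 2 := by
        rw [(h.summable.sub hmean).tsum_add hvar, h.summable.tsum_sub hmean, h.P_sum_one,
          tsum_mul_right, tsum_mul_right, h.mean_eq]
        ring

lemma exists_genFun_one_sub_le (h : CEContext P d ρ)
    (hsecond : Summable fun k : ℕ => (k : ℝ) ^ 2 * P k) :
    ∃ K, 0 < K ∧ ∀ w, 0 ≤ w → w ≤ 1 → genFun P (1 - w) ≤ 1 - d * w + K * w ^ 2 := by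
  have hM : 0 ≤ ∑' k : ℕ, (k : ℝ) ^ 2 * P k :=
    tsum_nonneg fun k => mul_nonneg (sq_nonneg _) (h.P_nonneg k)
  refine ⟨(∑' k : ℕ, (k : ℝ) ^ 2 * P k) / 2 + 1, by positivity, fun w h0 h1 => ?_⟩
  have := h.genFun_one_sub_le hsecond h0 h1
  nlinarith [sq_nonneg w]

end CEContext

section TailIntegral

variable {g : ℝ → ℝ}

lemma integrableOn_Ioi_mul_exp_neg {φ : ℝ → ℝ} (hφ : Measurable φ) (hb : ∀ s, |φ s| ≤ 1)
    (a : ℝ) : IntegrableOn (fun s => φ s * exp (-s)) (Ioi a) := by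
  have hexp : IntegrableOn (fun s => exp (-s)) (Ioi a) := by
    simpa using exp_neg_integrableOn_Ioi a one_pos
  refine hexp.mono' (hφ.mul (continuous_neg.rexp).measurable).aestronglyMeasurable
    (Eventually.of_forall fun s => ?_)
  rw [Real.norm_eq_abs, abs_mul, abs_of_pos (exp_pos _)]
  exact mul_le_of_le_one_left (exp_pos _).le (hb s)

lemma integral_Ioi_eq_sub (hg : ∀ a, IntegrableOn g (Ioi a)) (a b : ℝ) :
    ∫ s in Ioi b, g s = (∫ s in Ioi a, g s) - ∫ s in a..b, g s := by
  rw [← intervalIntegral.integral_interval_add_Ioi (hg a) (hg b)]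
  ring

lemma intervalIntegrable_of_integrableOn_Ioi (hg : ∀ a, IntegrableOn g (Ioi a)) (a b : ℝ) :
    IntervalIntegrable g volume a b :=
  intervalIntegrable_iff.2 ((hg (min a b)).mono_set Ioc_subset_Ioi_self)

lemma continuous_integral_Ioi (hg : ∀ a, IntegrableOn g (Ioi a)) :
    Continuous fun a => ∫ s in Ioi a, g s := by
  rw [funext (integral_Ioi_eq_sub hg 0)]
  exact continuous_const.sub
    (intervalIntegral.continuous_primitive (intervalIntegrable_of_integrableOn_Ioi hg) 0)

lemma hasDerivAt_integral_Ioi (hg : ∀ a, IntegrableOn g (Ioi a)) (hc : Continuous g) (a : ℝ) :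
    HasDerivAt (fun a => ∫ s in Ioi a, g s) (-g a) a := by
  rw [funext (integral_Ioi_eq_sub hg 0)]
  exact (intervalIntegral.integral_hasDerivAt_right (intervalIntegrable_of_integrableOn_Ioi hg 0 a)
    (hc.stronglyMeasurableAtFilter _ _) hc.continuousAt).const_sub _

end TailIntegral

noncomputable def ceMap (lam : ℝ) (G : ℝ → ℝ) (t : ℝ) : ℝ :=
  exp (-(lam * t)) + lam * exp (-(lam * t)) * ∫ u in (0 : ℝ)..t, exp ((lam + 1) * u) * G u

lemma ceMap_zero (lam : ℝ) (G : ℝ → ℝ) : ceMap lam G 0 = 1 := by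
  simp [ceMap]

lemma hasDerivAt_ceMap {lam : ℝ} {G : ℝ → ℝ} (hG : Continuous G) (t : ℝ) :
    HasDerivAt (ceMap lam G) (-lam * ceMap lam G t + lam * (exp t * G t)) t := by
  have hc : Continuous fun u => exp ((lam + 1) * u) * G u := by fun_prop
  have hF := intervalIntegral.integral_hasDerivAt_right (hc.intervalIntegrable 0 t)
    (hc.stronglyMeasurableAtFilter _ _) hc.continuousAt
  have hexp : HasDerivAt (fun t => exp (-(lam * t))) (exp (-(lam * t)) * -lam) t := by
    simpa using ((hasDerivAt_id t).const_mul lam).neg.exp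
  refine (hexp.add ((hexp.const_mul lam).mul hF)).congr_deriv ?_
  have : exp t = exp (-(lam * t)) * exp ((lam + 1) * t) := by rw [← exp_add]; ring_nf
  rw [this, ceMap]
  ring

/-- `x` is only prescribed on `[0, ∞)`; extending it by `x 0` to the left makes this tail integral
differentiable at `0` in the two-sided sense. -/
noncomputable def ceTail (P : ℕ → ℝ) (x : ℝ → ℝ) (a : ℝ) : ℝ :=
  ∫ s in Ioi a, genFun P (x (max s 0)) * exp (-s)

namespace IsCEFixedPoint

variable {P : ℕ → ℝ} {d ρ lam : ℝ} {x : ℝ → ℝ}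

lemma genFun_mem_Icc (hctx : CEContext P d ρ) (hx : IsCEFixedPoint P ρ lam x) (t : ℝ) :
    genFun P (x (max t 0)) ∈ Icc 0 1 :=
  have hxt := hx.1 _ (le_max_right t 0)
  ⟨hctx.genFun_nonneg hxt.1, hctx.genFun_le_one hxt.1 hxt.2⟩

lemma integrableOn_ceTail (hctx : CEContext P d ρ) (hx : IsCEFixedPoint P ρ lam x) (a : ℝ) :
    IntegrableOn (fun s => genFun P (x (max s 0)) * exp (-s)) (Ioi a) := by
  have hanti : Antitone fun t => genFun P (x (max t 0)) := fun s t hst =>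
    hctx.genFun_mono (hx.1 _ (le_max_right t 0)).1
      (hx.2.1 (le_max_right s 0) (le_max_right t 0) (max_le_max hst le_rfl))
      (hx.1 _ (le_max_right s 0)).2
  refine integrableOn_Ioi_mul_exp_neg hanti.measurable (fun s => ?_) a
  have := hx.genFun_mem_Icc hctx s
  exact abs_le.2 ⟨by linarith [this.1], this.2⟩

lemma eq_ceMap (hx : IsCEFixedPoint P ρ lam x) {t : ℝ} (ht : 0 ≤ t) :
    x t = ceMap lam (ceTail P x) t := by
  rw [hx.2.2.2.2 t ht, ceMap]
  congr 2
  refine intervalIntegral.integral_congr fun u hu => ?_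
  rw [uIcc_of_le ht] at hu
  refine congrArg _ (setIntegral_congr_fun measurableSet_Ioi fun s hs => ?_)
  rw [max_eq_left (hu.1.trans (le_of_lt hs))]

lemma continuous_genFun (hctx : CEContext P d ρ) (hx : IsCEFixedPoint P ρ lam x) :
    Continuous fun t => genFun P (x (max t 0)) := by
  have hG := continuous_integral_Ioi (hx.integrableOn_ceTail hctx)
  have hX : Continuous fun t => ceMap lam (ceTail P x) (max t 0) :=
    (continuous_iff_continuousAt.2 fun t => (hasDerivAt_ceMap hG t).continuousAt).comp
      (continuous_id.max continuous_const)
  have hx' : (fun t => x (max t 0)) = fun t => ceMap lam (ceTail P x) (max t 0) :=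
    funext fun t => hx.eq_ceMap (le_max_right t 0)
  rw [← hx'] at hX
  exact hctx.continuousOn_genFun.comp_continuous hX fun t => hx.1 _ (le_max_right t 0)

lemma ceTail_zero_le_one (hctx : CEContext P d ρ) (hx : IsCEFixedPoint P ρ lam x) :
    ceTail P x 0 ≤ 1 := by
  have hexp : IntegrableOn (fun s => exp (-s)) (Ioi 0) := by
    simpa using exp_neg_integrableOn_Ioi 0 one_pos
  rw [← integral_exp_neg_Ioi_zero]
  exact setIntegral_mono_on (hx.integrableOn_ceTail hctx 0) hexp measurableSet_Ioi fun s _ =>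
    mul_le_of_le_one_left (exp_pos _).le (hx.genFun_mem_Icc hctx s).2

theorem exists_linearization (hctx : CEContext P d ρ) (hx : IsCEFixedPoint P ρ lam x) :
    ∃ u v : ℝ → ℝ, (∀ t, HasDerivAt u (lam * (v t - u t)) t) ∧
      (∀ t, HasDerivAt v (v t - (1 - genFun P (x (max t 0)))) t) ∧
      (∀ t, 0 ≤ t → u t = 1 - x t) ∧ 0 ≤ v 0 ∧ derivWithin x (Ici 0) 0 = -(lam * v 0) := by
  have hint := hx.integrableOn_ceTail hctx
  have hG : Continuous (ceTail P x) := continuous_integral_Ioi hint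
  have hG' : ∀ t, HasDerivAt (ceTail P x) (-(genFun P (x (max t 0)) * exp (-t))) t :=
    hasDerivAt_integral_Ioi hint ((hx.continuous_genFun hctx).mul continuous_neg.rexp)
  refine ⟨fun t => 1 - ceMap lam (ceTail P x) t, fun t => 1 - exp t * ceTail P x t,
    fun t => ((hasDerivAt_ceMap hG t).const_sub 1).congr_deriv (by ring),
    fun t => (((hasDerivAt_exp t).mul (hG' t)).const_sub 1).congr_deriv ?_,
    fun t ht => by rw [hx.eq_ceMap ht], by simpa using hx.ceTail_zero_le_one hctx, ?_⟩
  · have : exp t * exp (-t) = 1 := by rw [← exp_add, add_neg_cancel, exp_zero]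
    linear_combination genFun P (x (max t 0)) * this
  · have hX := (hasDerivAt_ceMap (lam := lam) hG 0).hasDerivWithinAt (s := Ici 0) |>.congr
      (fun s hs => hx.eq_ceMap hs) (hx.eq_ceMap le_rfl)
    rw [hX.derivWithin (uniqueDiffOn_Ici 0 0 self_mem_Ici), ceMap_zero]
    simp only [exp_zero]
    ring

end IsCEFixedPoint

lemma CEContext.abs_linearization_error_le {P : ℕ → ℝ} {d ρ K : ℝ} (h : CEContext P d ρ)
    (hK : ∀ w, 0 ≤ w → w ≤ 1 → genFun P (1 - w) ≤ 1 - d * w + K * w ^ 2) {y : ℝ}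
    (h0 : 0 ≤ y) (h1 : y ≤ 1) : |d * (1 - y) - (1 - genFun P y)| ≤ K * (1 - y) ^ 2 := by
  have hlow := h.one_sub_mul_le_genFun_one_sub (w := 1 - y) (by linarith) (by linarith)
  have hup := hK (1 - y) (by linarith) (by linarith)
  rw [sub_sub_cancel] at hlow hup
  exact abs_le.2 ⟨by linarith, by linarith⟩

lemma IsCEFixedPoint.exists_ne_one {P : ℕ → ℝ} {ρ lam : ℝ} {x : ℝ → ℝ}
    (hx : IsCEFixedPoint P ρ lam x) (hρ : ρ ≠ 1) : ∃ t, 0 ≤ t ∧ x t ≠ 1 := by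
  by_contra! hone
  refine hρ (tendsto_nhds_unique hx.2.2.2.1 (tendsto_const_nhds.congr' ?_))
  filter_upwards [eventually_ge_atTop 0] with t ht using (hone t ht).symm

/-- `α ± ω i` are the eigenvalues of the matrix `[[-λ, λ], [-d, 1]]` of the linear part, and the
coordinate below is the one that diagonalizes it over `ℂ`. -/
lemma hasDerivAt_eigencoordinate {lam d α ω : ℝ} {u v φ : ℝ → ℝ} (hα : α = (1 - lam) / 2)
    (hαω : α ^ 2 + ω ^ 2 = lam * (d - 1))
    (hu : ∀ t, HasDerivAt u (lam * (v t - u t)) t) (hv : ∀ t, HasDerivAt v (v t - φ t) t)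
    (t : ℝ) :
    HasDerivAt (fun t => (((α - 1) * u t + lam * v t : ℝ) : ℂ) + (ω * u t : ℝ) * I)
      ((α + ω * I) * ((((α - 1) * u t + lam * v t : ℝ) : ℂ) + (ω * u t : ℝ) * I)
        + (lam * (d * u t - φ t) : ℝ)) t := by
  have hre := (((hu t).const_mul (α - 1)).add ((hv t).const_mul lam)).ofReal_comp
  have him := ((hu t).const_mul ω).ofReal_comp.mul_const I
  refine (hre.add him).congr_deriv (Complex.ext ?_ ?_)
  · simp only [Complex.add_re, Complex.mul_re, Complex.ofReal_re, Complex.ofReal_im,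
      Complex.I_re, Complex.I_im, Complex.add_im, Complex.mul_im]
    linear_combination (u t) * hαω - (2 * α * u t) * hα
  · simp only [Complex.add_re, Complex.mul_re, Complex.ofReal_re, Complex.ofReal_im,
      Complex.I_re, Complex.I_im, Complex.add_im, Complex.mul_im]
    linear_combination (-2 * ω * u t) * hα

lemma three_quarters_mul_le_sin {ω : ℝ} (h0 : 0 < ω) (h1 : ω ≤ 1) : 3 / 4 * ω ≤ sin ω := by
  have := sin_gt_sub_cube h0
  nlinarith [pow_le_pow_left₀ h0.le h1 2]

lemma min_mul_exp_le_of_le_one {α ω lam K : ℝ} (hω0 : 0 < ω) (hω1 : ω ≤ 1) (hα : 0 < α)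
    (hα1 : α ≤ 1 / 2) (hlam0 : 0 < lam) (hlam1 : lam ≤ 1) (hK : 0 < K) :
    min 1 (3 * α / (4 * K)) * ω ^ 3 * exp (-(α * π / ω + (1 + 2 * K * π + 2 * K)))
      ≤ min (ω ^ 3) (α * sin ω / (lam * K / ω ^ 2))
        * exp (-((α + 2 * (lam * K / ω ^ 2) * ω ^ 3) * (π / ω + 1))) := by
  have hsin := three_quarters_mul_le_sin hω0 hω1
  have hmin : min 1 (3 * α / (4 * K)) * ω ^ 3 ≤ min (ω ^ 3) (α * sin ω / (lam * K / ω ^ 2)) := by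
    refine le_min (mul_le_of_le_one_left (by positivity) (min_le_left _ _)) ?_
    calc min 1 (3 * α / (4 * K)) * ω ^ 3 ≤ 3 * α / (4 * K) * ω ^ 3 := by
          gcongr; exact min_le_right _ _
      _ = α * ω ^ 2 * (3 / 4 * ω) / K := by field_simp
      _ ≤ α * ω ^ 2 * sin ω / K := by gcongr
      _ ≤ α * ω ^ 2 * sin ω / (lam * K) := by
          have : 0 < sin ω := by linarith
          gcongr
          exact mul_le_of_le_one_left hK.le hlam1
      _ = α * sin ω / (lam * K / ω ^ 2) := by field_simp
  have hexp : (α + 2 * (lam * K / ω ^ 2) * ω ^ 3) * (π / ω + 1)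
      ≤ α * π / ω + (1 + 2 * K * π + 2 * K) := by
    have hrw : (α + 2 * (lam * K / ω ^ 2) * ω ^ 3) * (π / ω + 1)
        = α * π / ω + α + 2 * lam * K * π + 2 * lam * K * ω := by field_simp; ring
    rw [hrw]
    nlinarith [mul_le_mul_of_nonneg_right hlam1 (by positivity : 0 ≤ 2 * K * π),
      mul_le_mul (hlam1) hω1 hω0.le zero_le_one, pi_pos]
  exact mul_le_mul hmin (exp_le_exp.2 (neg_le_neg hexp)) (exp_pos _).le
    ((by positivity : 0 ≤ min 1 (3 * α / (4 * K)) * ω ^ 3).trans hmin)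

theorem IsCEFixedPoint.min_mul_exp_le_neg_derivWithin {P : ℕ → ℝ} {d ρ lam K ω : ℝ}
    {x : ℝ → ℝ} (hctx : CEContext P d ρ) (hK : 0 < K)
    (hψ : ∀ w, 0 ≤ w → w ≤ 1 → genFun P (1 - w) ≤ 1 - d * w + K * w ^ 2)
    (hx : IsCEFixedPoint P ρ lam x) (hlam0 : 0 < lam) (hlam1 : lam < 1) (hω0 : 0 < ω)
    (hω1 : ω ≤ 1) (hαω : ((1 - lam) / 2) ^ 2 + ω ^ 2 = lam * (d - 1)) :
    min 1 (3 * ((1 - lam) / 2) / (4 * K)) * ω ^ 3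
        * exp (-((1 - lam) / 2 * π / ω + (1 + 2 * K * π + 2 * K)))
      ≤ -derivWithin x (Ici 0) 0 := by
  obtain ⟨u, v, hu, hv, hux, hv0, hder⟩ := hx.exists_linearization hctx
  have hz := hasDerivAt_eigencoordinate rfl hαω hu hv
  have hu0 : ∀ t, 0 ≤ t → 0 ≤ u t := fun t ht => by
    rw [hux t ht]; linarith [(hx.1 t ht).2]
  -- `Im z = ω u`; the height `R = ω³`, i.e. `u = ω²`, keeps the Grönwall rate `κ R = λ K ω` of
  -- order `ω`, so that it costs only a constant factor over the half-turn time `π / ω + 1`.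
  have hbound := le_of_forall_im_nonneg (R := ω ^ 3) (κ := lam * K / ω ^ 2) (Q := lam * v 0)
    hω0 (by positivity) (by positivity) (by positivity) hz (fun t ht => ?_) (fun t ht => ?_) ?_
    (by positivity) ?_
  · rw [hder, neg_neg]
    exact (min_mul_exp_le_of_le_one hω0 hω1 (by positivity) (by linarith) hlam0 hlam1.le
      hK).trans hbound
  · simpa using mul_nonneg hω0.le (hu0 t ht)
  · have herr := hctx.abs_linearization_error_le hψ (hx.1 t ht).1 (hx.1 t ht).2
    rw [← hux t ht] at herr
    simp only [Complex.add_im, Complex.ofReal_im, Complex.im_ofReal_mul, Complex.I_im,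
      Complex.norm_real, Real.norm_eq_abs, abs_mul, abs_of_pos hlam0, max_eq_left ht]
    calc lam * |d * u t - (1 - genFun P (x t))| ≤ lam * (K * u t ^ 2) := by gcongr
      _ = lam * K / ω ^ 2 * (0 + ω * u t * 1) ^ 2 := by field_simp; ring
  · simp [hux 0 le_rfl, hx.2.2.1]
  · obtain ⟨t, ht, hxt⟩ := hx.exists_ne_one hctx.rho_lt_one.ne
    refine ⟨t, ht, fun hzt => hxt ?_⟩
    have := congrArg Complex.im hzt
    simp only [Complex.add_im, Complex.ofReal_im, Complex.im_ofReal_mul, Complex.I_im,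
      Complex.zero_im, zero_add, mul_one, mul_eq_zero, hω0.ne', false_or, hux t ht] at this
    linarith

section Parameters

variable {d lam : ℝ}

lemma lower_root_mem (hd : 1 < d) :
    0 < 2 * d - 1 - 2 * √(d * (d - 1)) ∧ 2 * d - 1 - 2 * √(d * (d - 1)) < 1 := by
  have hsq : √(d * (d - 1)) ^ 2 = d * (d - 1) := sq_sqrt (by nlinarith)
  have hpos : 0 < √(d * (d - 1)) := sqrt_pos.2 (by nlinarith)
  constructor <;> nlinarith

lemma discriminant_mem (hd : 1 < d) (h₁ : 2 * d - 1 - 2 * √(d * (d - 1)) < lam) (h₂ : lam < 1)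
    (h₃ : lam < 2 * d - 1 - 2 * √(d * (d - 1)) + 4 / (2 * d - 1 + 2 * √(d * (d - 1)))) :
    0 < -lam ^ 2 + 2 * (2 * d - 1) * lam - 1 ∧ -lam ^ 2 + 2 * (2 * d - 1) * lam - 1 ≤ 4 := by
  set s := √(d * (d - 1))
  have hsq : s ^ 2 = d * (d - 1) := sq_sqrt (by nlinarith)
  have hs : 0 < s := sqrt_pos.2 (by nlinarith)
  have hfac : -lam ^ 2 + 2 * (2 * d - 1) * lam - 1
      = (2 * d - 1 + 2 * s - lam) * (lam - (2 * d - 1 - 2 * s)) := by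
    linear_combination (-4) * hsq
  have hroot := (lower_root_mem hd).1
  have h₃' : (2 * d - 1 + 2 * s) * (lam - (2 * d - 1 - 2 * s)) < 4 := by
    rw [← lt_div_iff₀' (by linarith)]; linarith
  rw [hfac]
  constructor
  · exact mul_pos (by linarith) (by linarith)
  · nlinarith

lemma half_sqrt_discriminant_mem (hd : 1 < d) (h₁ : 2 * d - 1 - 2 * √(d * (d - 1)) < lam)
    (h₂ : lam < 1)
    (h₃ : lam < 2 * d - 1 - 2 * √(d * (d - 1)) + 4 / (2 * d - 1 + 2 * √(d * (d - 1)))) :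
    0 < 1 / 2 * √(-lam ^ 2 + 2 * (2 * d - 1) * lam - 1) ∧
      1 / 2 * √(-lam ^ 2 + 2 * (2 * d - 1) * lam - 1) ≤ 1 ∧
      ((1 - lam) / 2) ^ 2 + (1 / 2 * √(-lam ^ 2 + 2 * (2 * d - 1) * lam - 1)) ^ 2
        = lam * (d - 1) := by
  obtain ⟨hD0, hD4⟩ := discriminant_mem hd h₁ h₂ h₃
  have hsq := sq_sqrt hD0.le
  refine ⟨by positivity, ?_, by rw [mul_pow, hsq]; ring⟩
  nlinarith [sqrt_nonneg (-lam ^ 2 + 2 * (2 * d - 1) * lam - 1)]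

end Parameters

/-- if P has finite second moment, there exist c₁ > 0 and
λ₀ ∈ (λ₁, 1) such that for all λ ∈ (λ₁, λ₀) and any CE fixed point x,
x'(0) ≤ −c₁ ω³ e^{−π(1−λ)/(2ω)} where ω = (1/2)√(−λ² + 2(2d−1)λ − 1). -/
theorem ce_xprime_upper_bound {P : ℕ → ℝ} {d ρ : ℝ} (hctx : CEContext P d ρ)
    (hsecond : Summable (fun k : ℕ => (k : ℝ) ^ 2 * P k)) :
    ∃ c₁ lam₀ : ℝ, 0 < c₁ ∧
      2 * d - 1 - 2 * Real.sqrt (d * (d - 1)) < lam₀ ∧ lam₀ < 1 ∧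
      ∀ lam : ℝ, 2 * d - 1 - 2 * Real.sqrt (d * (d - 1)) < lam → lam < lam₀ →
        ∀ x : ℝ → ℝ, IsCEFixedPoint P ρ lam x →
          derivWithin x (Set.Ici 0) 0
            ≤ -(c₁ * ((1 / 2) * Real.sqrt (-lam ^ 2 + 2 * (2 * d - 1) * lam - 1)) ^ 3
              * Real.exp (-(Real.pi * (1 - lam) /
                (2 * ((1 / 2) * Real.sqrt (-lam ^ 2 + 2 * (2 * d - 1) * lam - 1)))))) := by
  have hd := hctx.d_gt_one
  obtain ⟨K, hK, hψ⟩ := hctx.exists_genFun_one_sub_le hsecond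
  obtain ⟨hroot0, hroot1⟩ := lower_root_mem hd
  have hgap : 0 < 4 / (2 * d - 1 + 2 * √(d * (d - 1))) :=
    div_pos four_pos (by linarith [sqrt_nonneg (d * (d - 1))])
  -- the first bound keeps `ω ≤ 1`, the second keeps `α = (1 - λ) / 2` away from `0`
  set lam₀ := min (2 * d - 1 - 2 * √(d * (d - 1)) + 4 / (2 * d - 1 + 2 * √(d * (d - 1))))
    ((1 + (2 * d - 1 - 2 * √(d * (d - 1)))) / 2)
  have hlam₀1 : lam₀ < 1 := (min_le_right _ _).trans_lt (by linarith)
  refine ⟨exp (-(1 + 2 * K * π + 2 * K)) * min 1 (3 * ((1 - lam₀) / 2) / (4 * K)), lam₀,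
    by positivity, lt_min (by linarith) (by linarith), hlam₀1, fun lam h₁ h₀ x hx => ?_⟩
  have hlam1 : lam < 1 := h₀.trans hlam₀1
  obtain ⟨hω0, hω1, hαω⟩ :=
    half_sqrt_discriminant_mem hd h₁ hlam1 (h₀.trans_le (min_le_left _ _))
  set ω := 1 / 2 * √(-lam ^ 2 + 2 * (2 * d - 1) * lam - 1)
  rw [le_neg]
  refine le_trans ?_
    (hx.min_mul_exp_le_neg_derivWithin hctx hK hψ (by linarith) hlam1 hω0 hω1 hαω)
  have hE : exp (-((1 - lam) / 2 * π / ω + (1 + 2 * K * π + 2 * K)))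
      = exp (-(1 + 2 * K * π + 2 * K)) * exp (-(π * (1 - lam) / (2 * ω))) := by
    rw [← exp_add]; ring_nf
  rw [hE]
  calc exp (-(1 + 2 * K * π + 2 * K)) * min 1 (3 * ((1 - lam₀) / 2) / (4 * K)) * ω ^ 3
        * exp (-(π * (1 - lam) / (2 * ω)))
      = min 1 (3 * ((1 - lam₀) / 2) / (4 * K)) * ω ^ 3
        * (exp (-(1 + 2 * K * π + 2 * K)) * exp (-(π * (1 - lam) / (2 * ω)))) := by ring
    _ ≤ _ := by gcongr
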